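/- arXiv:1712.02130 — 4 statements merged into one kernel-verified Lean document; each statement's English description precedes it below -/
import Mathlib

section
/- There is an absolute constant C with the following property: for every continuously differentiable real-valued function u on an open subset of ℝ^{1+2} and every point (t,x) in its domain with t≥0, one has |t−|x||·|∂u(t,x)| ≤ C ( |∂_t u| + |∂₁u| + |∂₂u| + |Ωu| + |L₁u| + |L₂u| + |Su| )(t,x), where |∂u| denotes the Euclidean norm of (∂_t u, ∂₁u, ∂₂u). -/
noncomputable section

open MeasureTheory Real Set

/-- Partial derivative in coordinate direction `i` on space-time `ℝ³`
(coordinate `0` is time, coordinates `1, 2` are space). -/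
def pd (i : Fin 3) (u : (Fin 3 → ℝ) → ℝ) : (Fin 3 → ℝ) → ℝ :=
  fun X => fderiv ℝ u X (Pi.single i 1)

/-- The d'Alembertian `□ = ∂_t² - ∂₁² - ∂₂²`. -/
def box (u : (Fin 3 → ℝ) → ℝ) : (Fin 3 → ℝ) → ℝ :=
  fun X => pd 0 (pd 0 u) X - pd 1 (pd 1 u) X - pd 2 (pd 2 u) X

/-- The seven Klainerman vector fields `Γ = (∂_t, ∂₁, ∂₂, Ω, L₁, L₂, S̃)`. -/
def Gamma (i : Fin 7) (u : (Fin 3 → ℝ) → ℝ) : (Fin 3 → ℝ) → ℝ :=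
  if i = 0 then pd 0 u
  else if i = 1 then pd 1 u
  else if i = 2 then pd 2 u
  else if i = 3 then fun X => -(X 2) * pd 1 u X + X 1 * pd 2 u X
  else if i = 4 then fun X => X 0 * pd 1 u X + X 1 * pd 0 u X
  else if i = 5 then fun X => X 0 * pd 2 u X + X 2 * pd 0 u X
  else fun X => X 0 * pd 0 u X + X 1 * pd 1 u X + X 2 * pd 2 u X - 2 * u X

/-- `Γ^a` for a multi-index `a = (a₁,…,a₇) ∈ ℕ⁷`. -/
def GammaPow (a : Fin 7 → ℕ) (u : (Fin 3 → ℝ) → ℝ) : (Fin 3 → ℝ) → ℝ :=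
  (Gamma 0)^[a 0] <| (Gamma 1)^[a 1] <| (Gamma 2)^[a 2] <| (Gamma 3)^[a 3] <|
    (Gamma 4)^[a 4] <| (Gamma 5)^[a 5] <| (Gamma 6)^[a 6] u

/-- The point `(t, x) ∈ ℝ^{1+2}`. -/
def pt (t : ℝ) (x : ℝ × ℝ) : Fin 3 → ℝ := ![t, x.1, x.2]

/-- `|∂v|²` at a point. -/
def pdSq (v : (Fin 3 → ℝ) → ℝ) (X : Fin 3 → ℝ) : ℝ :=
  (pd 0 v X) ^ 2 + (pd 1 v X) ^ 2 + (pd 2 v X) ^ 2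

/-- The spatial radius `r = |x|` of a space-time point. -/
def rad (X : Fin 3 → ℝ) : ℝ := Real.sqrt ((X 1) ^ 2 + (X 2) ^ 2)

/-- Multi-indices `a ∈ ℕ⁷` with `|a| ≤ k`. -/
def multiIndex7 (k : ℕ) : Finset (Fin 7 → ℕ) :=
  (Fintype.piFinset fun _ => Finset.range (k + 1)).filter fun a => ∑ i, a i ≤ k

/-- The generalized energy `E_k(u(t)) = (1/2) ∑_{|a| ≤ k-1} ∫ |∂Γ^a u|² dx`. -/
def energy (k : ℕ) (u : (Fin 3 → ℝ) → ℝ) (t : ℝ) : ℝ :=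
  (1 / 2) * ∑ a ∈ multiIndex7 (k - 1), ∫ x : ℝ × ℝ, pdSq (GammaPow a u) (pt t x)

/-- Partial derivatives on the plane `ℝ²`. -/
def pdx (i : Fin 2) (f : ℝ × ℝ → ℝ) : ℝ × ℝ → ℝ :=
  fun x => fderiv ℝ f x (if i = 0 then (1, 0) else (0, 1))

/-- The fields `Λ = (∂₁, ∂₂, r∂_r, Ω)` on `ℝ²`. -/
def Lam (i : Fin 4) (f : ℝ × ℝ → ℝ) : ℝ × ℝ → ℝ :=
  if i = 0 then pdx 0 f
  else if i = 1 then pdx 1 f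
  else if i = 2 then fun x => x.1 * pdx 0 f x + x.2 * pdx 1 f x
  else fun x => -x.2 * pdx 0 f x + x.1 * pdx 1 f x

/-- `Λ^a` for a multi-index `a ∈ ℕ⁴`. -/
def LamPow (a : Fin 4 → ℕ) (f : ℝ × ℝ → ℝ) : ℝ × ℝ → ℝ :=
  (Lam 0)^[a 0] <| (Lam 1)^[a 1] <| (Lam 2)^[a 2] <| (Lam 3)^[a 3] f

/-- Multi-indices `a ∈ ℕ⁴` with `|a| ≤ k`. -/
def multiIndex4 (k : ℕ) : Finset (Fin 4 → ℕ) :=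
  (Fintype.piFinset fun _ => Finset.range (k + 1)).filter fun a => ∑ i, a i ≤ k

/-- The `L²(ℝ²)` norm. -/
def L2 (f : ℝ × ℝ → ℝ) : ℝ := (eLpNorm f 2 volume).toReal

/-- `|∇f|` for a function on `ℝ²`. -/
def gradAbs (f : ℝ × ℝ → ℝ) : ℝ × ℝ → ℝ :=
  fun x => Real.sqrt ((pdx 0 f x) ^ 2 + (pdx 1 f x) ^ 2)

/-- Membership `(f, g) ∈ H^k_Λ`. -/
def MemHLam (k : ℕ) (f g : ℝ × ℝ → ℝ) : Prop :=
  ∀ a ∈ multiIndex4 (k - 1),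
    MemLp (LamPow a f) 2 (volume : Measure (ℝ × ℝ)) ∧
    MemLp (gradAbs (LamPow a f)) 2 (volume : Measure (ℝ × ℝ)) ∧
    MemLp (LamPow a g) 2 (volume : Measure (ℝ × ℝ))

/-- The norm `‖(f, g)‖_{H^k_Λ} = ∑_{|a| ≤ k-1} (‖∇Λ^a f‖_{L²} + ‖Λ^a g‖_{L²})`. -/
def HLamNorm (k : ℕ) (f g : ℝ × ℝ → ℝ) : ℝ :=
  ∑ a ∈ multiIndex4 (k - 1), (L2 (gradAbs (LamPow a f)) + L2 (LamPow a g))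

/-- The Japanese bracket `⟨t⟩ = √(1 + t²)`. -/
def jb (t : ℝ) : ℝ := Real.sqrt (1 + t ^ 2)

/-- The null condition for the coefficients `N_{αβμν}`. -/
def NullCond (N : Fin 3 → Fin 3 → Fin 3 → Fin 3 → ℝ) : Prop :=
  ∀ X : Fin 3 → ℝ, (X 0) ^ 2 = (X 1) ^ 2 + (X 2) ^ 2 →
    ∑ α : Fin 3, ∑ β : Fin 3, ∑ μ : Fin 3, ∑ ν : Fin 3,
      N α β μ ν * X α * X β * X μ * X ν = 0

/-- The symmetry condition `N_{αβμν} = N_{βαμν} = N_{αβνμ}`. -/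
def SymCond (N : Fin 3 → Fin 3 → Fin 3 → Fin 3 → ℝ) : Prop :=
  ∀ α β μ ν, N α β μ ν = N β α μ ν ∧ N α β μ ν = N α β ν μ

/-- The quadratic nonlinearity `N(u, v) = ∑ N_{αβμν} ∂_α∂_β u ∂_μ∂_ν v`. -/
def NL (N : Fin 3 → Fin 3 → Fin 3 → Fin 3 → ℝ) (u v : (Fin 3 → ℝ) → ℝ) :
    (Fin 3 → ℝ) → ℝ :=
  fun X => ∑ α : Fin 3, ∑ β : Fin 3, ∑ μ : Fin 3, ∑ ν : Fin 3,
    N α β μ ν * pd α (pd β u) X * pd μ (pd ν v) X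

/-- A global classical solution of `□u = N(u, u)` on `[0, ∞) × ℝ²` with data `(φ, ψ)`. -/
def IsGlobalSolution (N : Fin 3 → Fin 3 → Fin 3 → Fin 3 → ℝ)
    (φ ψ : ℝ × ℝ → ℝ) (u : (Fin 3 → ℝ) → ℝ) : Prop :=
  ContDiff ℝ 2 u ∧
  (∀ X : Fin 3 → ℝ, 0 ≤ X 0 → box u X = NL N u u X) ∧
  (∀ x : ℝ × ℝ, u (pt 0 x) = φ x ∧ pd 0 u (pt 0 x) = ψ x)

/-- The quadratic nonlinearity `∑ N_{μδ} ∂_μ v ∂_δ v` of the quasilinear equation. -/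
def QNL (N : Fin 3 → Fin 3 → ℝ) (v : (Fin 3 → ℝ) → ℝ) : (Fin 3 → ℝ) → ℝ :=
  fun X => ∑ μ : Fin 3, ∑ δ : Fin 3, N μ δ * pd μ v X * pd δ v X

/-- The null condition for the coefficients `N_{μδ}`. -/
def NullCond2 (N : Fin 3 → Fin 3 → ℝ) : Prop :=
  ∀ X : Fin 3 → ℝ, (X 0) ^ 2 = (X 1) ^ 2 + (X 2) ^ 2 →
    ∑ μ : Fin 3, ∑ δ : Fin 3, N μ δ * X μ * X δ = 0

/-- A global classical solution of `□v = ∑ A_l ∂_l (∑ N_{μδ} ∂_μ v ∂_δ v)` with data `(v₀, v₁)`. -/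
def IsGlobalQSolution (A : Fin 3 → ℝ) (N : Fin 3 → Fin 3 → ℝ)
    (v₀ v₁ : ℝ × ℝ → ℝ) (v : (Fin 3 → ℝ) → ℝ) : Prop :=
  ContDiff ℝ 2 v ∧
  (∀ X : Fin 3 → ℝ, 0 ≤ X 0 → box v X = ∑ l : Fin 3, A l * pd l (QNL N v) X) ∧
  (∀ x : ℝ × ℝ, v (pt 0 x) = v₀ x ∧ pd 0 v (pt 0 x) = v₁ x)

/-! The scaling field and the boosts span the radial-null directions: with `r = |x|`,
`(t² - r²) ∂_t u = t Su - x₁ L₁u - x₂ L₂u`, `(t² - r²) ∂₁u = t L₁u - x₁ Su + x₂ Ωu` and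
`(t² - r²) ∂₂u = t L₂u - x₂ Su - x₁ Ωu`. Every coefficient on the right is bounded by `t + r`
when `t ≥ 0`, so dividing by `t + r` bounds `|t - r| |∂_α u|` by three of the fields `Su, L₁u, L₂u, Ωu`.
-/

theorem abs_mul_abs_le_of_mul_eq {ρ e d p₁ p₂ p₃ q₁ q₂ q₃ : ℝ} (hρ : 0 < ρ)
    (h : e * ρ * d = p₁ * q₁ + p₂ * q₂ + p₃ * q₃)
    (h₁ : |p₁| ≤ ρ) (h₂ : |p₂| ≤ ρ) (h₃ : |p₃| ≤ ρ) :
    |e| * |d| ≤ |q₁| + |q₂| + |q₃| := by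
  refine le_of_mul_le_mul_right ?_ hρ
  calc |e| * |d| * ρ = |p₁ * q₁ + p₂ * q₂ + p₃ * q₃| := by
        rw [← h, abs_mul, abs_mul, abs_of_pos hρ]; ring
    _ ≤ |p₁| * |q₁| + |p₂| * |q₂| + |p₃| * |q₃| := by
        simpa only [abs_mul] using abs_add_three (p₁ * q₁) (p₂ * q₂) (p₃ * q₃)
    _ ≤ ρ * |q₁| + ρ * |q₂| + ρ * |q₃| := by gcongr
    _ = (|q₁| + |q₂| + |q₃|) * ρ := by ring

theorem sqrt_sq_add_sq_add_sq_le (a b c : ℝ) : √(a ^ 2 + b ^ 2 + c ^ 2) ≤ |a| + |b| + |c| :=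
  Real.sqrt_le_iff.mpr ⟨by positivity, by
    nlinarith [sq_abs a, sq_abs b, sq_abs c, abs_nonneg a, abs_nonneg b, abs_nonneg c]⟩

theorem abs_sub_sqrt_mul_sqrt_le {t x₁ x₂ a b c : ℝ} (ht : 0 ≤ t) :
    |t - √(x₁ ^ 2 + x₂ ^ 2)| * √(a ^ 2 + b ^ 2 + c ^ 2) ≤
      3 * (|-x₂ * b + x₁ * c| + |t * b + x₁ * a| + |t * c + x₂ * a| +
        |t * a + x₁ * b + x₂ * c|) := by
  set r := √(x₁ ^ 2 + x₂ ^ 2)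
  have hr : 0 ≤ r := Real.sqrt_nonneg _
  have hr2 : r ^ 2 = x₁ ^ 2 + x₂ ^ 2 := Real.sq_sqrt (by positivity)
  rcases (add_nonneg ht hr).eq_or_lt with htr | htr
  · have ht0 : t = 0 := by linarith
    have hr0 : r = 0 := by linarith
    rw [ht0, hr0, sub_zero, abs_zero, zero_mul]
    positivity
  have ht' : |t| ≤ t + r := by rw [abs_of_nonneg ht]; linarith
  have hx₁r : |x₁| ≤ r := Real.abs_le_sqrt (by nlinarith [sq_nonneg x₂])
  have hx₂r : |x₂| ≤ r := Real.abs_le_sqrt (by nlinarith [sq_nonneg x₁])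
  have hx₁ : |-x₁| ≤ t + r := by rw [abs_neg]; linarith
  have hx₂ : |x₂| ≤ t + r := by linarith
  have hx₂' : |-x₂| ≤ t + r := by rwa [abs_neg]
  have ha := abs_mul_abs_le_of_mul_eq (e := t - r) (d := a) (q₁ := t * a + x₁ * b + x₂ * c)
    (q₂ := t * b + x₁ * a) (q₃ := t * c + x₂ * a) htr
    (by linear_combination (-a) * hr2) ht' hx₁ hx₂'
  have hb := abs_mul_abs_le_of_mul_eq (e := t - r) (d := b) (q₁ := t * b + x₁ * a)
    (q₂ := t * a + x₁ * b + x₂ * c) (q₃ := -x₂ * b + x₁ * c) htr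
    (by linear_combination (-b) * hr2) ht' hx₁ hx₂
  have hc := abs_mul_abs_le_of_mul_eq (e := t - r) (d := c) (q₁ := t * c + x₂ * a)
    (q₂ := t * a + x₁ * b + x₂ * c) (q₃ := -x₂ * b + x₁ * c) htr
    (by linear_combination (-c) * hr2) ht' hx₂' hx₁
  calc |t - r| * √(a ^ 2 + b ^ 2 + c ^ 2) ≤ |t - r| * (|a| + |b| + |c|) := by
        gcongr; exact sqrt_sq_add_sq_add_sq_le a b c
    _ ≤ _ := by linarith [abs_nonneg (-x₂ * b + x₁ * c), abs_nonneg (t * b + x₁ * a),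
        abs_nonneg (t * c + x₂ * a)]

/-- Lemma 2.2, inequality (2.5):
`|t-r| |∂u| ≲ |∂_t u| + |∂₁u| + |∂₂u| + |Ωu| + |L₁u| + |L₂u| + |Su|` for `t ≥ 0`. -/
theorem bad_derivative_bound :
    ∃ C : ℝ, 0 < C ∧
      ∀ (u : (Fin 3 → ℝ) → ℝ) (s : Set (Fin 3 → ℝ)), IsOpen s →
        ContDiffOn ℝ 1 u s → ∀ X ∈ s, 0 ≤ X 0 →
          |X 0 - rad X| * Real.sqrt (pdSq u X) ≤
            C * (|pd 0 u X| + |pd 1 u X| + |pd 2 u X| +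
              |-(X 2) * pd 1 u X + X 1 * pd 2 u X| +
              |X 0 * pd 1 u X + X 1 * pd 0 u X| +
              |X 0 * pd 2 u X + X 2 * pd 0 u X| +
              |X 0 * pd 0 u X + X 1 * pd 1 u X + X 2 * pd 2 u X|) := by
  refine ⟨3, by norm_num, fun u _ _ _ X _ ht => ?_⟩
  calc _ ≤ 3 * (|-(X 2) * pd 1 u X + X 1 * pd 2 u X| + |X 0 * pd 1 u X + X 1 * pd 0 u X| +
          |X 0 * pd 2 u X + X 2 * pd 0 u X| +
          |X 0 * pd 0 u X + X 1 * pd 1 u X + X 2 * pd 2 u X|) :=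
        abs_sub_sqrt_mul_sqrt_le ht
    _ ≤ _ := by
        gcongr
        linarith [abs_nonneg (pd 0 u X), abs_nonneg (pd 1 u X), abs_nonneg (pd 2 u X)]

end
end

section
/- Let N_{αβμν} (α,β,μ,ν∈{0,1,2}) be real coefficients satisfying the null condition. There exists a constant C>0, depending only on the coefficients, such that for all C² real-valued functions u, v defined near a point (t,x)∈ℝ^{1+2} with t≥0 and |x|≥1, one has |N(u,v)(t,x)| ≤ (C/|x|) · (|∂Γu| + |∂u|)(t,x) · (|∂Γv| + |∂v|)(t,x), where N(u,v)=Σ N_{αβμν} ∂_α∂_β u ∂_μ∂_ν v. -/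
noncomputable section

open MeasureTheory Real Set

/-- `|∂v|` at a point. -/
def absPd (v : (Fin 3 → ℝ) → ℝ) (X : Fin 3 → ℝ) : ℝ := Real.sqrt (pdSq v X)

/-- `|∂Γu|` at a point: the sum over the seven fields `Γ'` of `|∂Γ'u|`. -/
def absPdGam (u : (Fin 3 → ℝ) → ℝ) (X : Fin 3 → ℝ) : ℝ :=
  ∑ i : Fin 7, absPd (Gamma i u) X


/-!
At a point with `r = |x| > 0` put `ω = x / r` and `ξ = (-1, ω)`, a null covector. The identities
`∂_t + ∂_r = (S + ω·L) / (t + r)` and `∂_i - ω_i ∂_r = ∓ ω_j Ω / r` say that each `∂_γ` differs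
from `ξ_γ ∂_r` by vector fields `Γ` divided by `r`. Applied to `∂_j u`, and since the commutators
`[∂_j, Γ]` are first-order, this gives `∂_α ∂_β u = ξ_α ξ_β ∂_r² u + O((|∂Γu| + |∂u|) / r)`. In
`N(u, v)` the product of the two leading terms is `∂_r² u ∂_r² v ∑ N ξ_α ξ_β ξ_μ ξ_ν = 0`, and every
other term contains a factor `1 / r`.
-/

open Matrix

section Algebra

variable {ι : Type*} [Fintype ι]

theorem abs_dotProduct_le {v w : ι → ℝ} {M : ℝ} (hw : ∀ i, |w i| ≤ M) :
    |v ⬝ᵥ w| ≤ (∑ i, |v i|) * M := by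
  rw [dotProduct, Finset.sum_mul]
  refine (Finset.abs_sum_le_sum_abs _ _).trans (Finset.sum_le_sum fun i _ => ?_)
  rw [abs_mul]
  exact mul_le_mul_of_nonneg_left (hw i) (abs_nonneg _)

theorem Matrix.IsSymm.abs_sub_mul_mul_vecMul_dotProduct_le {H : Matrix ι ι ℝ} (hH : H.IsSymm)
    {ξ ω : ι → ℝ} {ε : ℝ} (hξ : ∀ α, |ξ α| ≤ 1) (hT : ∀ γ j, |H γ j - ξ γ * (ω ᵥ* H) j| ≤ ε)
    (α β : ι) : |H α β - ξ α * ξ β * (ω ᵥ* H ⬝ᵥ ω)| ≤ (1 + ∑ i, |ω i|) * ε := by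
  have hrow : (ω ᵥ* H) β - ξ β * (ω ᵥ* H ⬝ᵥ ω) = ω ⬝ᵥ fun i => H β i - ξ β * (ω ᵥ* H) i := by
    simp only [dotProduct, mul_sub, Finset.sum_sub_distrib]
    congr 1
    · exact Finset.sum_congr rfl fun i _ => congrArg (ω i * ·) (hH.apply β i)
    · rw [Finset.mul_sum]
      exact Finset.sum_congr rfl fun i _ => by ring
  have hsplit : H α β - ξ α * ξ β * (ω ᵥ* H ⬝ᵥ ω) =
      (H α β - ξ α * (ω ᵥ* H) β) + ξ α * ((ω ᵥ* H) β - ξ β * (ω ᵥ* H ⬝ᵥ ω)) := by ring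
  rw [hsplit, hrow]
  calc _ ≤ ε + 1 * ((∑ i, |ω i|) * ε) := by
        refine (abs_add_le _ _).trans (add_le_add (hT α β) ?_)
        rw [abs_mul]
        exact mul_le_mul (hξ α) (abs_dotProduct_le fun i => hT β i) (abs_nonneg _) zero_le_one
    _ = (1 + ∑ i, |ω i|) * ε := by ring

theorem abs_mul_sub_mul_le {a b p q K L ε δ : ℝ} (hp : |p| ≤ K) (hq : |q| ≤ L)
    (ha : |a - p| ≤ ε) (hb : |b - q| ≤ δ) : |a * b - p * q| ≤ K * δ + ε * L + ε * δ := by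
  have h : a * b - p * q = p * (b - q) + (a - p) * q + (a - p) * (b - q) := by ring
  rw [h]
  refine (abs_add_three _ _ _).trans ?_
  have hK := (abs_nonneg _).trans hp
  have hε := (abs_nonneg _).trans ha
  simp only [abs_mul]
  gcongr

theorem abs_sum_four_le {f g : ι → ι → ι → ι → ℝ} (h : ∀ α β μ ν, |f α β μ ν| ≤ g α β μ ν) :
    |∑ α, ∑ β, ∑ μ, ∑ ν, f α β μ ν| ≤ ∑ α, ∑ β, ∑ μ, ∑ ν, g α β μ ν := by
  refine (Finset.abs_sum_le_sum_abs _ _).trans (Finset.sum_le_sum fun α _ => ?_)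
  refine (Finset.abs_sum_le_sum_abs _ _).trans (Finset.sum_le_sum fun β _ => ?_)
  refine (Finset.abs_sum_le_sum_abs _ _).trans (Finset.sum_le_sum fun μ _ => ?_)
  exact (Finset.abs_sum_le_sum_abs _ _).trans (Finset.sum_le_sum fun ν _ => h α β μ ν)

theorem abs_nullForm_le (N : ι → ι → ι → ι → ℝ) {ξ : ι → ℝ} (hξ : ∀ α, |ξ α| ≤ 1)
    (hnull : ∑ α, ∑ β, ∑ μ, ∑ ν, N α β μ ν * ξ α * ξ β * ξ μ * ξ ν = 0)
    {a b : ι → ι → ℝ} {k l K L ε δ : ℝ} (hk : |k| ≤ K) (hl : |l| ≤ L)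
    (ha : ∀ α β, |a α β - ξ α * ξ β * k| ≤ ε) (hb : ∀ μ ν, |b μ ν - ξ μ * ξ ν * l| ≤ δ) :
    |∑ α, ∑ β, ∑ μ, ∑ ν, N α β μ ν * a α β * b μ ν| ≤
      (∑ α, ∑ β, ∑ μ, ∑ ν, |N α β μ ν|) * (K * δ + ε * L + ε * δ) := by
  have hξξ (α β : ι) (c C : ℝ) (hc : |c| ≤ C) : |ξ α * ξ β * c| ≤ C := by
    rw [abs_mul, abs_mul]
    have := hξ α; have := hξ β
    calc |ξ α| * |ξ β| * |c| ≤ 1 * 1 * C := by gcongr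
      _ = C := by ring
  have hsub : ∑ α, ∑ β, ∑ μ, ∑ ν, N α β μ ν * a α β * b μ ν =
      ∑ α, ∑ β, ∑ μ, ∑ ν, N α β μ ν *
        (a α β * b μ ν - (ξ α * ξ β * k) * (ξ μ * ξ ν * l)) := by
    rw [← sub_zero (∑ α, ∑ β, ∑ μ, ∑ ν, N α β μ ν * a α β * b μ ν), ← mul_zero (k * l), ← hnull]
    simp only [Finset.mul_sum, ← Finset.sum_sub_distrib]
    exact Finset.sum_congr rfl fun _ _ => Finset.sum_congr rfl fun _ _ =>
      Finset.sum_congr rfl fun _ _ => Finset.sum_congr rfl fun _ _ => by ring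
  rw [hsub]
  simp only [Finset.sum_mul]
  refine abs_sum_four_le fun α β μ ν => ?_
  rw [abs_mul]
  exact mul_le_mul_of_nonneg_left
    (abs_mul_sub_mul_le (hξξ α β k K hk) (hξξ μ ν l L hl) (ha α β) (hb μ ν)) (abs_nonneg _)

end Algebra

section SecondDerivative

variable {E : Type*} [NormedAddCommGroup E] [NormedSpace ℝ E] {u : E → ℝ} {X : E}

theorem fderiv_fderiv_apply_comm (hu : ContDiffAt ℝ 2 u X) (v w : E) :
    fderiv ℝ (fun Y => fderiv ℝ u Y v) X w = fderiv ℝ (fun Y => fderiv ℝ u Y w) X v := by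
  have hd : DifferentiableAt ℝ (fderiv ℝ u) X :=
    (hu.fderiv_right (m := 1) le_rfl).differentiableAt one_ne_zero
  simp only [fderiv_clm_apply hd (differentiableAt_const _)]
  simpa using (hu.isSymmSndFDerivAt (by simp)) w v

theorem fderiv_fderiv_apply_clm (hu : ContDiffAt ℝ 2 u X) (c : E →L[ℝ] E) (v : E) :
    fderiv ℝ (fun Y => fderiv ℝ u Y (c Y)) X v =
      fderiv ℝ (fun Y => fderiv ℝ u Y v) X (c X) + fderiv ℝ u X (c v) := by
  have hd : DifferentiableAt ℝ (fderiv ℝ u) X :=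
    (hu.fderiv_right (m := 1) le_rfl).differentiableAt one_ne_zero
  rw [fderiv_clm_apply hd c.differentiableAt, fderiv_fderiv_apply_comm hu]
  simp [fderiv_clm_apply hd (differentiableAt_const _), add_comm]

end SecondDerivative

section Coordinates

variable {u : (Fin 3 → ℝ) → ℝ} {X : Fin 3 → ℝ}

theorem fderiv_apply_eq_dotProduct_pd (w : (Fin 3 → ℝ) → ℝ) (X v : Fin 3 → ℝ) :
    fderiv ℝ w X v = v ⬝ᵥ fun i => pd i w X := by
  have hsingle (i : Fin 3) : (fun j => if i = j then (1 : ℝ) else 0) = Pi.single i 1 := by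
    ext j
    simp [Pi.single_apply, eq_comm]
  simpa [hsingle, dotProduct, pd] using (fderiv ℝ w X).toLinearMap.pi_apply_eq_sum_univ v

theorem pd_pd_comm (hu : ContDiffAt ℝ 2 u X) (α β : Fin 3) :
    pd α (pd β u) X = pd β (pd α u) X :=
  fderiv_fderiv_apply_comm hu _ _

def hess (u : (Fin 3 → ℝ) → ℝ) (X : Fin 3 → ℝ) : Matrix (Fin 3) (Fin 3) ℝ :=
  fun α β => pd α (pd β u) X

theorem hess_isSymm (hu : ContDiffAt ℝ 2 u X) : (hess u X).IsSymm :=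
  IsSymm.ext fun α β => pd_pd_comm hu β α

def linField (M : Matrix (Fin 3) (Fin 3) ℝ) (u : (Fin 3 → ℝ) → ℝ) : (Fin 3 → ℝ) → ℝ :=
  fun Y => (M *ᵥ Y) ⬝ᵥ fun k => pd k u Y

theorem linField_eq_fderiv_apply (M : Matrix (Fin 3) (Fin 3) ℝ) (u : (Fin 3 → ℝ) → ℝ) :
    linField M u = fun Y => fderiv ℝ u Y ((toLin' M).toContinuousLinearMap Y) := by
  ext Y
  simp [linField, fderiv_apply_eq_dotProduct_pd]

theorem pd_linField (hu : ContDiffAt ℝ 2 u X) (M : Matrix (Fin 3) (Fin 3) ℝ) (j : Fin 3) :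
    pd j (linField M u) X = linField M (pd j u) X + (fun k => M k j) ⬝ᵥ fun k => pd k u X := by
  rw [linField_eq_fderiv_apply, pd, fderiv_fderiv_apply_clm hu]
  simp only [LinearMap.coe_toContinuousLinearMap', toLin'_apply, mulVec_single_one]
  rw [fderiv_apply_eq_dotProduct_pd, fderiv_apply_eq_dotProduct_pd]
  rfl

theorem differentiableAt_linField (hu : ContDiffAt ℝ 2 u X) (M : Matrix (Fin 3) (Fin 3) ℝ) :
    DifferentiableAt ℝ (linField M u) X := by
  rw [linField_eq_fderiv_apply]
  exact ((hu.fderiv_right (m := 1) le_rfl).differentiableAt one_ne_zero).clm_apply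
    (ContinuousLinearMap.differentiableAt _)

-- `linField (fieldMatrix k)` is `Ω, L₁, L₂, S` for `k = 0, 1, 2, 3`.
def fieldMatrix : Fin 4 → Matrix (Fin 3) (Fin 3) ℝ
  | 0 => !![0, 0, 0; 0, 0, -1; 0, 1, 0]
  | 1 => !![0, 1, 0; 1, 0, 0; 0, 0, 0]
  | 2 => !![0, 0, 1; 0, 0, 0; 1, 0, 0]
  | 3 => 1

theorem abs_fieldMatrix_le (k : Fin 4) (i j : Fin 3) : |fieldMatrix k i j| ≤ 1 := by
  revert k i j
  simp [Fin.forall_fin_succ, fieldMatrix, one_apply]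

theorem fieldMatrix_mulVec_dotProduct (X g : Fin 3 → ℝ) :
    (fieldMatrix 0 *ᵥ X) ⬝ᵥ g = -(X 2 * g 1) + X 1 * g 2 ∧
    (fieldMatrix 1 *ᵥ X) ⬝ᵥ g = X 1 * g 0 + X 0 * g 1 ∧
    (fieldMatrix 2 *ᵥ X) ⬝ᵥ g = X 2 * g 0 + X 0 * g 2 ∧
    (fieldMatrix 3 *ᵥ X) ⬝ᵥ g = X 0 * g 0 + X 1 * g 1 + X 2 * g 2 := by
  simp [fieldMatrix, dotProduct, mulVec, Fin.sum_univ_three, one_apply]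

theorem abs_pd_le_absPd (w : (Fin 3 → ℝ) → ℝ) (X : Fin 3 → ℝ) (α : Fin 3) :
    |pd α w X| ≤ absPd w X := by
  have h : pdSq w X = ∑ i, pd i w X ^ 2 := by simp [pdSq, Fin.sum_univ_three]
  rw [← Real.sqrt_sq_eq_abs, absPd, h]
  exact Real.sqrt_le_sqrt
    (Finset.single_le_sum (f := fun i => pd i w X ^ 2) (fun i _ => sq_nonneg _) (Finset.mem_univ α))

theorem absPd_nonneg (w : (Fin 3 → ℝ) → ℝ) (X : Fin 3 → ℝ) : 0 ≤ absPd w X :=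
  Real.sqrt_nonneg _

theorem absPdGam_nonneg (u : (Fin 3 → ℝ) → ℝ) (X : Fin 3 → ℝ) : 0 ≤ absPdGam u X :=
  Finset.sum_nonneg fun _ _ => absPd_nonneg _ _

theorem absPdGam_add_absPd_nonneg (u : (Fin 3 → ℝ) → ℝ) (X : Fin 3 → ℝ) :
    0 ≤ absPdGam u X + absPd u X :=
  add_nonneg (absPdGam_nonneg u X) (absPd_nonneg u X)

theorem abs_pd_Gamma_le (u : (Fin 3 → ℝ) → ℝ) (X : Fin 3 → ℝ) (i : Fin 7) (α : Fin 3) :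
    |pd α (Gamma i u) X| ≤ absPdGam u X :=
  (abs_pd_le_absPd _ X α).trans <|
    Finset.single_le_sum (f := fun i => absPd (Gamma i u) X) (fun _ _ => absPd_nonneg _ _)
      (Finset.mem_univ i)

theorem linField_fieldMatrix (u : (Fin 3 → ℝ) → ℝ) :
    linField (fieldMatrix 0) u = Gamma 3 u ∧ linField (fieldMatrix 1) u = Gamma 4 u ∧
      linField (fieldMatrix 2) u = Gamma 5 u ∧
      Gamma 6 u = fun Y => linField (fieldMatrix 3) u Y - 2 * u Y := by
  refine ⟨?_, ?_, ?_, ?_⟩ <;> ext Y <;>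
    obtain ⟨e₀, e₁, e₂, e₃⟩ := fieldMatrix_mulVec_dotProduct Y fun i => pd i u Y <;>
    simp only [linField, e₀, e₁, e₂, e₃, _root_.Gamma, Fin.reduceEq, ↓reduceIte] <;> ring

theorem abs_pd_linField_fieldMatrix_le (hu : ContDiffAt ℝ 2 u X) (k : Fin 4) (j : Fin 3) :
    |pd j (linField (fieldMatrix k) u) X| ≤ absPdGam u X + 2 * absPd u X := by
  obtain ⟨h₀, h₁, h₂, h₃⟩ := linField_fieldMatrix u
  have hP := absPd_nonneg u X
  fin_cases k
  · simpa [h₀] using (abs_pd_Gamma_le u X 3 j).trans (by linarith)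
  · simpa [h₁] using (abs_pd_Gamma_le u X 4 j).trans (by linarith)
  · simpa [h₂] using (abs_pd_Gamma_le u X 5 j).trans (by linarith)
  · have hd : pd j (Gamma 6 u) X = pd j (linField (fieldMatrix 3) u) X - 2 * pd j u X := by
      rw [h₃, pd, fderiv_fun_sub (differentiableAt_linField hu _)
        ((hu.differentiableAt two_ne_zero).const_mul 2), fderiv_const_mul
        (hu.differentiableAt two_ne_zero)]
      rfl
    show |pd j (linField (fieldMatrix 3) u) X| ≤ _
    calc |pd j (linField (fieldMatrix 3) u) X| = |pd j (Gamma 6 u) X + 2 * pd j u X| := by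
          rw [hd, sub_add_cancel]
      _ ≤ |pd j (Gamma 6 u) X| + 2 * |pd j u X| :=
          (abs_add_le _ _).trans_eq (by rw [abs_mul, abs_two])
      _ ≤ absPdGam u X + 2 * absPd u X := by
          linarith [abs_pd_Gamma_le u X 6 j, abs_pd_le_absPd u X j]

end Coordinates

section Frame

variable {X g : Fin 3 → ℝ} {B : ℝ}

def radialDir (X : Fin 3 → ℝ) : Fin 3 → ℝ := ![0, X 1 / rad X, X 2 / rad X]

def nullDir (X : Fin 3 → ℝ) : Fin 3 → ℝ := ![-1, X 1 / rad X, X 2 / rad X]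

theorem rad_sq (X : Fin 3 → ℝ) : rad X ^ 2 = X 1 ^ 2 + X 2 ^ 2 :=
  Real.sq_sqrt (by positivity)

theorem div_rad_sq_add_sq (hr : 0 < rad X) : (X 1 / rad X) ^ 2 + (X 2 / rad X) ^ 2 = 1 := by
  rw [div_pow, div_pow, ← add_div, ← rad_sq, div_self (by positivity)]

theorem abs_coord_div_rad_le (hr : 0 < rad X) {i : Fin 3} (hi : i ≠ 0) : |X i / rad X| ≤ 1 := by
  rw [abs_div, abs_of_pos hr, div_le_one hr, ← Real.sqrt_sq_eq_abs]
  apply Real.sqrt_le_sqrt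
  fin_cases i
  · exact absurd rfl hi
  · exact le_add_of_nonneg_right (sq_nonneg (X 2))
  · exact le_add_of_nonneg_left (sq_nonneg (X 1))

theorem abs_nullDir_le (hr : 0 < rad X) (α : Fin 3) : |nullDir X α| ≤ 1 := by
  fin_cases α
  · simp [nullDir]
  · exact abs_coord_div_rad_le hr (i := 1) (by decide)
  · exact abs_coord_div_rad_le hr (i := 2) (by decide)

theorem nullDir_sq (hr : 0 < rad X) : nullDir X 0 ^ 2 = nullDir X 1 ^ 2 + nullDir X 2 ^ 2 := by
  show (-1 : ℝ) ^ 2 = (X 1 / rad X) ^ 2 + (X 2 / rad X) ^ 2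
  rw [div_rad_sq_add_sq hr]
  norm_num

theorem sum_abs_radialDir_le (hr : 0 < rad X) : ∑ i, |radialDir X i| ≤ 2 := by
  have h1 := abs_coord_div_rad_le hr (i := 1) (by decide)
  have h2 := abs_coord_div_rad_le hr (i := 2) (by decide)
  have h : ∑ i, |radialDir X i| = |X 1 / rad X| + |X 2 / rad X| := by
    simp [Fin.sum_univ_three, radialDir]
  linarith

theorem radialDir_dotProduct (X g : Fin 3 → ℝ) :
    radialDir X ⬝ᵥ g = X 1 / rad X * g 1 + X 2 / rad X * g 2 := by
  simp [radialDir, dotProduct, Fin.sum_univ_three]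

-- `∂_t + ∂_r = (S + ω₁ L₁ + ω₂ L₂) / (t + r)`
theorem abs_add_radialDir_dotProduct_le (ht : 0 ≤ X 0) (hr : 0 < rad X)
    (hS : |X 0 * g 0 + X 1 * g 1 + X 2 * g 2| ≤ B) (hL₁ : |X 1 * g 0 + X 0 * g 1| ≤ B)
    (hL₂ : |X 2 * g 0 + X 0 * g 2| ≤ B) : |g 0 + radialDir X ⬝ᵥ g| ≤ 3 * B / rad X := by
  have hω₁ := abs_coord_div_rad_le hr (i := 1) (by decide)
  have hω₂ := abs_coord_div_rad_le hr (i := 2) (by decide)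
  have htr : 0 < X 0 + rad X := by linarith
  have h : g 0 + radialDir X ⬝ᵥ g = (X 0 * g 0 + X 1 * g 1 + X 2 * g 2
      + X 1 / rad X * (X 1 * g 0 + X 0 * g 1) + X 2 / rad X * (X 2 * g 0 + X 0 * g 2))
        / (X 0 + rad X) := by
    rw [radialDir_dotProduct, eq_div_iff htr.ne']
    field_simp
    linear_combination g 0 * rad_sq X
  rw [h, abs_div, abs_of_pos htr]
  refine div_le_div₀ (by linarith [(abs_nonneg _).trans hS]) ?_ hr (by linarith)
  refine (abs_add_three _ _ _).trans ?_
  rw [abs_mul, abs_mul]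
  linarith [mul_le_mul hω₁ hL₁ (abs_nonneg _) zero_le_one,
    mul_le_mul hω₂ hL₂ (abs_nonneg _) zero_le_one]

-- `∂_i - ω_i ∂_r = ∓ ω_j Ω / r`
theorem abs_sub_mul_radialDir_dotProduct_le (hr : 0 < rad X)
    (hΩ : |-(X 2 * g 1) + X 1 * g 2| ≤ B) :
    |g 1 - X 1 / rad X * (radialDir X ⬝ᵥ g)| ≤ B / rad X ∧
      |g 2 - X 2 / rad X * (radialDir X ⬝ᵥ g)| ≤ B / rad X := by
  have hω := div_rad_sq_add_sq hr
  have hΩr : |(-(X 2 * g 1) + X 1 * g 2) / rad X| ≤ B / rad X := by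
    rw [abs_div, abs_of_pos hr]
    gcongr
  rw [radialDir_dotProduct]
  constructor
  · rw [show g 1 - X 1 / rad X * (X 1 / rad X * g 1 + X 2 / rad X * g 2) =
        -(X 2 / rad X) * ((-(X 2 * g 1) + X 1 * g 2) / rad X) by
      linear_combination (-g 1) * hω, abs_mul, abs_neg]
    exact (mul_le_mul (abs_coord_div_rad_le hr (by decide)) hΩr (abs_nonneg _)
      zero_le_one).trans_eq (one_mul _)
  · rw [show g 2 - X 2 / rad X * (X 1 / rad X * g 1 + X 2 / rad X * g 2) =
        X 1 / rad X * ((-(X 2 * g 1) + X 1 * g 2) / rad X) by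
      linear_combination (-g 2) * hω, abs_mul]
    exact (mul_le_mul (abs_coord_div_rad_le hr (by decide)) hΩr (abs_nonneg _)
      zero_le_one).trans_eq (one_mul _)

theorem abs_sub_nullDir_mul_le (ht : 0 ≤ X 0) (hr : 0 < rad X)
    (hB : ∀ k, |(fieldMatrix k *ᵥ X) ⬝ᵥ g| ≤ B) (γ : Fin 3) :
    |g γ - nullDir X γ * (radialDir X ⬝ᵥ g)| ≤ 3 * B / rad X := by
  obtain ⟨e₀, e₁, e₂, e₃⟩ := fieldMatrix_mulVec_dotProduct X g
  have hΩ := e₀ ▸ hB 0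
  have hB0 : 0 ≤ B := (abs_nonneg _).trans (hB 0)
  have hBr : B / rad X ≤ 3 * B / rad X := by gcongr; linarith
  fin_cases γ
  · show |g 0 - -1 * (radialDir X ⬝ᵥ g)| ≤ _
    rw [neg_one_mul, sub_neg_eq_add]
    exact abs_add_radialDir_dotProduct_le ht hr (e₃ ▸ hB 3) (e₁ ▸ hB 1) (e₂ ▸ hB 2)
  · exact (abs_sub_mul_radialDir_dotProduct_le hr hΩ).1.trans hBr
  · exact (abs_sub_mul_radialDir_dotProduct_le hr hΩ).2.trans hBr

end Frame

section NullFrameDecomposition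

variable {u : (Fin 3 → ℝ) → ℝ} {X : Fin 3 → ℝ}

theorem abs_hess_le (u : (Fin 3 → ℝ) → ℝ) (X : Fin 3 → ℝ) (α β : Fin 3) :
    |hess u X α β| ≤ absPdGam u X := by
  fin_cases β
  · exact abs_pd_Gamma_le u X 0 α
  · exact abs_pd_Gamma_le u X 1 α
  · exact abs_pd_Gamma_le u X 2 α

theorem abs_linField_fieldMatrix_pd_le (hu : ContDiffAt ℝ 2 u X) (k : Fin 4) (j : Fin 3) :
    |linField (fieldMatrix k) (pd j u) X| ≤ absPdGam u X + 5 * absPd u X := by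
  have hcomm : |(fun i => fieldMatrix k i j) ⬝ᵥ fun i => pd i u X| ≤ 3 * absPd u X := by
    refine (abs_dotProduct_le fun i => abs_pd_le_absPd u X i).trans ?_
    refine mul_le_mul_of_nonneg_right ?_ (absPd_nonneg u X)
    simpa using Finset.sum_le_sum fun i (_ : i ∈ Finset.univ) => abs_fieldMatrix_le k i j
  rw [← add_sub_cancel_right (linField _ _ X), ← pd_linField hu]
  refine (abs_sub _ _).trans ?_
  linarith [abs_pd_linField_fieldMatrix_le hu k j]

def radialSecondDeriv (u : (Fin 3 → ℝ) → ℝ) (X : Fin 3 → ℝ) : ℝ :=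
  radialDir X ᵥ* hess u X ⬝ᵥ radialDir X

theorem abs_radialSecondDeriv_le (hr : 0 < rad X) :
    |radialSecondDeriv u X| ≤ 4 * absPdGam u X := by
  have hω := sum_abs_radialDir_le hr
  rw [radialSecondDeriv, dotProduct_comm]
  refine (abs_dotProduct_le fun j => abs_dotProduct_le fun i => abs_hess_le u X i j).trans ?_
  have := Finset.sum_nonneg fun i (_ : i ∈ Finset.univ) => abs_nonneg (radialDir X i)
  have := (abs_nonneg _).trans (abs_hess_le u X 0 0)
  calc _ ≤ 2 * (2 * absPdGam u X) := by gcongr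
    _ = 4 * absPdGam u X := by ring

theorem abs_hess_sub_le (hu : ContDiffAt ℝ 2 u X) (ht : 0 ≤ X 0) (hr : 0 < rad X)
    (α β : Fin 3) :
    |hess u X α β - nullDir X α * nullDir X β * radialSecondDeriv u X| ≤
      45 * (absPdGam u X + absPd u X) / rad X := by
  have hT (γ j : Fin 3) := abs_sub_nullDir_mul_le ht hr
    (fun k => abs_linField_fieldMatrix_pd_le hu k j) γ
  refine ((hess_isSymm hu).abs_sub_mul_mul_vecMul_dotProduct_le (abs_nullDir_le hr) hT α β).trans ?_
  have hω := sum_abs_radialDir_le hr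
  have hA := absPdGam_nonneg u X
  have hP := absPd_nonneg u X
  rw [← mul_div_assoc, div_le_div_iff_of_pos_right hr]
  nlinarith

end NullFrameDecomposition

theorem abs_NL_le {N : Fin 3 → Fin 3 → Fin 3 → Fin 3 → ℝ} (hnull : NullCond N)
    {u v : (Fin 3 → ℝ) → ℝ} {X : Fin 3 → ℝ} (hu : ContDiffAt ℝ 2 u X) (hv : ContDiffAt ℝ 2 v X)
    (ht : 0 ≤ X 0) (hr : 1 ≤ rad X) :
    |NL N u v X| ≤ 2385 * (∑ α, ∑ β, ∑ μ, ∑ ν, |N α β μ ν|) / rad X *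
      ((absPdGam u X + absPd u X) * (absPdGam v X + absPd v X)) := by
  set S := ∑ α, ∑ β, ∑ μ, ∑ ν, |N α β μ ν|
  set Eu := absPdGam u X + absPd u X
  set Ev := absPdGam v X + absPd v X
  have hr0 : 0 < rad X := one_pos.trans_le hr
  have hEuv : 0 ≤ Eu * Ev :=
    mul_nonneg (absPdGam_add_absPd_nonneg u X) (absPdGam_add_absPd_nonneg v X)
  have hKu : |radialSecondDeriv u X| ≤ 4 * Eu :=
    (abs_radialSecondDeriv_le hr0).trans (by linarith [absPd_nonneg u X])
  have hKv : |radialSecondDeriv v X| ≤ 4 * Ev :=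
    (abs_radialSecondDeriv_le hr0).trans (by linarith [absPd_nonneg v X])
  have hw : 1 / rad X ≤ 1 := (div_le_one hr0).2 hr
  calc |NL N u v X|
      ≤ S * (4 * Eu * (45 * Ev / rad X) + 45 * Eu / rad X * (4 * Ev)
          + 45 * Eu / rad X * (45 * Ev / rad X)) :=
        abs_nullForm_le N (abs_nullDir_le hr0) (hnull (nullDir X) (nullDir_sq hr0)) hKu hKv
          (abs_hess_sub_le hu ht hr0) (abs_hess_sub_le hv ht hr0)
    _ = (360 + 2025 * (1 / rad X)) * (S * (1 / rad X) * (Eu * Ev)) := by ring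
    _ ≤ 2385 * (S * (1 / rad X) * (Eu * Ev)) := by gcongr; linarith
    _ = 2385 * S / rad X * (Eu * Ev) := by ring

/-- Lemma 3.1: under the null condition, for `|x| ≥ 1`,
`|N(u,v)| ≲ (1/r) (|∂Γu| + |∂u|)(|∂Γv| + |∂v|)`. -/
theorem null_form_pointwise_bound
    (N : Fin 3 → Fin 3 → Fin 3 → Fin 3 → ℝ) (hnull : NullCond N) :
    ∃ C : ℝ, 0 < C ∧
      ∀ (u v : (Fin 3 → ℝ) → ℝ) (s : Set (Fin 3 → ℝ)), IsOpen s →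
        ContDiffOn ℝ 2 u s → ContDiffOn ℝ 2 v s →
        ∀ X ∈ s, 0 ≤ X 0 → 1 ≤ rad X →
          |NL N u v X| ≤
            C / rad X * ((absPdGam u X + absPd u X) * (absPdGam v X + absPd v X)) := by
  refine ⟨2385 * (∑ α, ∑ β, ∑ μ, ∑ ν, |N α β μ ν| + 1), by positivity,
    fun u v s hs hus hvs X hX ht hr => ?_⟩
  refine (abs_NL_le hnull (hus.contDiffAt (hs.mem_nhds hX)) (hvs.contDiffAt (hs.mem_nhds hX))
    ht hr).trans (mul_le_mul_of_nonneg_right ?_ ?_)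
  · gcongr
    linarith
  · exact mul_nonneg (absPdGam_add_absPd_nonneg u X) (absPdGam_add_absPd_nonneg v X)
end
end

section
/- Let A=(A₀,A₁,A₂)∈ℝ³ with A≠0, and let N_{μδ} (μ,δ∈{0,1,2}) be real coefficients. Then N_{μδ}X_μX_δ=0 holds for all X in the light cone Σ if and only if A_l N_{μδ} X_l X_μ X_δ = 0 (summed over l,μ,δ) holds for all X in Σ. -/
noncomputable section

open MeasureTheory Real Set

/-! Factor the cubic as `(A ⬝ᵥ X) · N(X, X)`. Restricted to the circle of generators
`θ ↦ (1, cos θ, sin θ)` of the cone, the linear factor is a nonzero analytic function, so it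
cannot vanish on an open arc; hence the continuous quadratic factor vanishes on a dense set of
generators, so on all of them, and by homogeneity on the whole cone. -/

theorem AnalyticOnNhd.eq_zero_of_smul_eq_zero {𝕜 E F : Type*} [NontriviallyNormedField 𝕜]
    [NormedAddCommGroup E] [NormedSpace 𝕜 E] [PreconnectedSpace E]
    [NormedAddCommGroup F] [NormedSpace 𝕜 F] {f : E → 𝕜} {g : E → F}
    (hf : AnalyticOnNhd 𝕜 f univ) (hg : Continuous g) (hfg : ∀ x, f x • g x = 0)
    (hf0 : f ≠ 0) : g = 0 := by
  by_contra hg0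
  obtain ⟨x, hx⟩ := Function.ne_iff.mp hg0
  have hf_near : f =ᶠ[nhds x] 0 := (hg.continuousAt.eventually_ne hx).mono fun y hy =>
    (smul_eq_zero.mp (hfg y)).resolve_right hy
  exact hf0 <| funext fun y => hf.eqOn_zero_of_preconnected_of_eventuallyEq_zero
    isPreconnected_univ (mem_univ x) hf_near (mem_univ y)

section Sums

variable {ι R : Type*} [Fintype ι] [CommSemiring R]

theorem sum_sum_sum_mul_eq_dotProduct_mul (A : ι → R) (N : ι → ι → R) (X : ι → R) :
    ∑ l, ∑ μ, ∑ δ, A l * N μ δ * X l * X μ * X δ =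
      (A ⬝ᵥ X) * ∑ μ, ∑ δ, N μ δ * X μ * X δ := by
  rw [dotProduct, Finset.sum_mul]
  refine Fintype.sum_congr _ _ fun l => ?_
  rw [Finset.mul_sum]
  refine Fintype.sum_congr _ _ fun μ => ?_
  rw [Finset.mul_sum]
  refine Fintype.sum_congr _ _ fun δ => ?_
  ring

theorem sum_sum_mul_smul_mul_smul (N : ι → ι → R) (c : R) (X : ι → R) :
    ∑ μ, ∑ δ, N μ δ * (c • X) μ * (c • X) δ = c ^ 2 * ∑ μ, ∑ δ, N μ δ * X μ * X δ := by
  simp only [Pi.smul_apply, smul_eq_mul, Finset.mul_sum]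
  refine Fintype.sum_congr _ _ fun μ => Fintype.sum_congr _ _ fun δ => ?_
  ring

end Sums

theorem Real.exists_cos_eq_sin_eq {c s : ℝ} (h : c ^ 2 + s ^ 2 = 1) :
    ∃ θ, cos θ = c ∧ sin θ = s := by
  have hz : ‖(⟨c, s⟩ : ℂ)‖ = 1 := by
    rw [Complex.norm_def, Complex.normSq_mk, ← sq, ← sq, h, Real.sqrt_one]
  have hz0 : (⟨c, s⟩ : ℂ) ≠ 0 := norm_ne_zero_iff.mp (by rw [hz]; exact one_ne_zero)
  exact ⟨Complex.arg ⟨c, s⟩, by rw [Complex.cos_arg hz0, hz, div_one],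
    by rw [Complex.sin_arg, hz, div_one]⟩

def coneGenerator (θ : ℝ) : Fin 3 → ℝ := ![1, cos θ, sin θ]

theorem coneGenerator_mem_lightCone (θ : ℝ) :
    (coneGenerator θ 0) ^ 2 = (coneGenerator θ 1) ^ 2 + (coneGenerator θ 2) ^ 2 := by
  simp [coneGenerator, cos_sq_add_sin_sq]

@[fun_prop]
theorem continuous_coneGenerator : Continuous coneGenerator :=
  continuous_pi fun i => by fin_cases i <;> simp [coneGenerator] <;> fun_prop

theorem dotProduct_coneGenerator (A : Fin 3 → ℝ) (θ : ℝ) :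
    A ⬝ᵥ coneGenerator θ = A 0 + A 1 * cos θ + A 2 * sin θ := by
  simp [dotProduct, coneGenerator, Fin.sum_univ_three]

theorem analyticOnNhd_dotProduct_coneGenerator (A : Fin 3 → ℝ) :
    AnalyticOnNhd ℝ (fun θ => A ⬝ᵥ coneGenerator θ) univ := fun θ _ => by
  simp only [dotProduct_coneGenerator]
  fun_prop

theorem eq_zero_of_forall_dotProduct_coneGenerator {A : Fin 3 → ℝ}
    (h : ∀ θ, A ⬝ᵥ coneGenerator θ = 0) : A = 0 := by
  have h₀ := h 0
  have h₁ := h π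
  have h₂ := h (π / 2)
  simp only [dotProduct_coneGenerator, cos_zero, sin_zero, cos_pi, sin_pi, cos_pi_div_two,
    sin_pi_div_two] at h₀ h₁ h₂
  ext i
  fin_cases i <;> simp <;> linarith

theorem exists_eq_smul_coneGenerator {X : Fin 3 → ℝ} (hX : (X 0) ^ 2 = (X 1) ^ 2 + (X 2) ^ 2) :
    ∃ θ, X = X 0 • coneGenerator θ := by
  rcases eq_or_ne (X 0) 0 with h0 | h0
  · have h1 : X 1 = 0 := by nlinarith [sq_nonneg (X 1), sq_nonneg (X 2)]
    have h2 : X 2 = 0 := by nlinarith [sq_nonneg (X 1), sq_nonneg (X 2)]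
    refine ⟨0, ?_⟩
    ext i
    fin_cases i <;> simp [h0, h1, h2]
  · obtain ⟨θ, hc, hs⟩ := Real.exists_cos_eq_sin_eq (c := X 1 / X 0) (s := X 2 / X 0) (by
      rw [div_pow, div_pow, ← add_div, ← hX, div_self (pow_ne_zero 2 h0)])
    refine ⟨θ, ?_⟩
    ext i
    fin_cases i <;> simp [coneGenerator, hc, hs, mul_div_cancel₀ _ h0]

/-- Remark 1.3 / Section 5: for `A ≠ 0`, the null condition
`N_{μδ} X_μ X_δ = 0` on the light cone is equivalent to
`A_l N_{μδ} X_l X_μ X_δ = 0` on the light cone. -/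
theorem null_condition_equivalence
    (A : Fin 3 → ℝ) (hA : A ≠ 0) (N : Fin 3 → Fin 3 → ℝ) :
    NullCond2 N ↔
      ∀ X : Fin 3 → ℝ, (X 0) ^ 2 = (X 1) ^ 2 + (X 2) ^ 2 →
        ∑ l : Fin 3, ∑ μ : Fin 3, ∑ δ : Fin 3, A l * N μ δ * X l * X μ * X δ = 0 := by
  simp only [sum_sum_sum_mul_eq_dotProduct_mul]
  refine ⟨fun hN X hX => by rw [hN X hX, mul_zero], fun h X hX => ?_⟩
  have hgen : (fun θ => ∑ μ, ∑ δ, N μ δ * coneGenerator θ μ * coneGenerator θ δ) = 0 :=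
    (analyticOnNhd_dotProduct_coneGenerator A).eq_zero_of_smul_eq_zero
      (by fun_prop) (fun θ => h _ (coneGenerator_mem_lightCone θ))
      (fun hA0 => hA (eq_zero_of_forall_dotProduct_coneGenerator (congrFun hA0)))
  obtain ⟨θ, hθ⟩ := exists_eq_smul_coneGenerator hX
  rw [hθ, sum_sum_mul_smul_mul_smul, congrFun hgen θ, Pi.zero_apply, mul_zero]

end
end

section
/- Let C₁≥1, M>0 and 0<γ<1/8. There exist constants ε₀∈(0,e^{−M}) and C₀>1, depending only on C₁, M and γ, with the following property: for any T∈(0,∞], any 0<ε≤ε₀, and any continuously differentiable functions E,F:[0,T)→[0,∞) satisfying E(0)≤M², F(0)≤ε², E'(t) ≤ C₁⟨t⟩^{−1} E(t) F(t)^{1/2} and F'(t) ≤ C₁⟨t⟩^{−3/2} E(t)^{1/2} F(t) for all t∈[0,T), one has E(t) ≤ C₀M²⟨t⟩^{γ} and F(t) ≤ C₀ε²e^{C₀M} for all t∈[0,T). -/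
noncomputable section

open Real Set

/-!
A continuity argument. As long as `E ≤ 4M²⟨t⟩^γ`, the rate in the inequality for `F` is at most
`4C₁M(1+t)^{-(3-γ)/2}`, which is integrable, so by Grönwall `F ≤ ε² e^{8C₁M/(1-γ)}`. For small `ε`
this gives `C₁√F ≤ γ`, so the rate in the inequality for `E` is at most `γ⟨t⟩⁻¹ = (γ arsinh)'`;
Grönwall and `e^{arsinh t} = t + ⟨t⟩ ≤ 2⟨t⟩` then give `E ≤ 2M²⟨t⟩^γ`. The assumed bound thus
improves itself, so it never fails.
-/

open Filter Topology

lemma jb_pos (t : ℝ) : 0 < jb t := sqrt_pos.mpr (by positivity)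

lemma continuous_jb : Continuous jb := by
  unfold jb
  fun_prop

lemma abs_le_jb (t : ℝ) : |t| ≤ jb t := by
  rw [← sqrt_sq_eq_abs, jb]
  exact sqrt_le_sqrt (by linarith)

lemma exp_mul_arsinh_le {γ : ℝ} (hγ0 : 0 ≤ γ) (hγ1 : γ ≤ 1) (t : ℝ) :
    exp (γ * arsinh t) ≤ 2 * jb t ^ γ := by
  have hjb : t + jb t ≤ 2 * jb t := by linarith [(le_abs_self t).trans (abs_le_jb t)]
  have hpos : 0 ≤ t + jb t := by linarith [(neg_le_abs t).trans (abs_le_jb t)]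
  calc exp (γ * arsinh t) = (t + jb t) ^ γ := by rw [mul_comm, exp_mul, exp_arsinh, jb]
    _ ≤ (2 * jb t) ^ γ := rpow_le_rpow hpos hjb hγ0
    _ = 2 ^ γ * jb t ^ γ := mul_rpow zero_le_two (jb_pos t).le
    _ ≤ 2 * jb t ^ γ := mul_le_mul_of_nonneg_right
      (by simpa using rpow_le_rpow_of_exponent_le one_le_two hγ1) (rpow_nonneg (jb_pos t).le _)

lemma jb_rpow_neg_le {q s : ℝ} (hq0 : 0 ≤ q) (hq2 : q ≤ 2) (hs : 0 ≤ s) :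
    jb s ^ (-q) ≤ 2 * (1 + s) ^ (-q) := by
  have hle : 1 + s ≤ √2 * jb s := by
    rw [jb, ← sqrt_mul zero_le_two]
    exact le_sqrt_of_sq_le (by nlinarith [sq_nonneg (s - 1)])
  have hsqrt2 : √2 ^ q ≤ 2 := by
    calc √2 ^ q ≤ √2 ^ (2 : ℝ) := rpow_le_rpow_of_exponent_le (one_le_sqrt.2 one_le_two) hq2
      _ = 2 := by rw [rpow_two, sq_sqrt zero_le_two]
  have key : (1 + s) ^ q ≤ 2 * jb s ^ q :=
    calc (1 + s) ^ q ≤ (√2 * jb s) ^ q := rpow_le_rpow (by linarith) hle hq0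
      _ = √2 ^ q * jb s ^ q := mul_rpow (sqrt_nonneg 2) (jb_pos s).le
      _ ≤ 2 * jb s ^ q := mul_le_mul_of_nonneg_right hsqrt2 (rpow_nonneg (jb_pos s).le _)
  rw [rpow_neg (jb_pos s).le, rpow_neg (by linarith)]
  calc (jb s ^ q)⁻¹ ≤ ((1 + s) ^ q / 2)⁻¹ := inv_anti₀ (by positivity) (by linarith)
    _ = 2 * ((1 + s) ^ q)⁻¹ := by rw [inv_div, div_eq_mul_inv]

theorem le_mul_exp_sub_of_deriv_le_mul {f f' k K : ℝ → ℝ} {a b : ℝ}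
    (hf : ContinuousOn f (Icc a b)) (hf' : ∀ x ∈ Ico a b, HasDerivWithinAt f (f' x) (Ici x) x)
    (hK : ∀ x ∈ Icc a b, HasDerivAt K (k x) x) (hle : ∀ x ∈ Ico a b, f' x ≤ k x * f x) :
    ∀ x ∈ Icc a b, f x ≤ f a * exp (K x - K a) := by
  have hderiv : ∀ x ∈ Ico a b, HasDerivWithinAt (fun y => f y * exp (-K y))
      (f' x * exp (-K x) + f x * (exp (-K x) * -k x)) (Ici x) x := fun x hx =>
    (hf' x hx).mul (hK x (Ico_subset_Icc_self hx)).neg.exp.hasDerivWithinAt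
  have hcont : ContinuousOn (fun y => f y * exp (-K y)) (Icc a b) :=
    hf.mul fun x hx => (hK x hx).neg.exp.continuousAt.continuousWithinAt
  have hanti : ∀ x ∈ Icc a b, f x * exp (-K x) ≤ f a * exp (-K a) :=
    image_le_of_deriv_right_le_deriv_boundary (B' := fun _ => 0) hcont hderiv le_rfl
      continuousOn_const (fun _ _ => hasDerivWithinAt_const _ _ _) fun x hx => by
      have : f x * (exp (-K x) * -k x) = -(k x * f x) * exp (-K x) := by ring
      rw [this, ← add_mul]
      exact mul_nonpos_of_nonpos_of_nonneg (by linarith [hle x hx]) (exp_pos _).le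
  intro x hx
  calc f x = f x * exp (-K x) * exp (K x) := by rw [mul_assoc, ← exp_add]; simp
    _ ≤ f a * exp (-K a) * exp (K x) := mul_le_mul_of_nonneg_right (hanti x hx) (exp_pos _).le
    _ = f a * exp (K x - K a) := by rw [mul_assoc, ← exp_add]; ring_nf

theorem le_mul_exp_of_deriv_le_mul_one_add_rpow {f f' : ℝ → ℝ} {A β b : ℝ} (hA : 0 ≤ A)
    (hβ : 0 < β) (hf : ContinuousOn f (Icc 0 b))
    (hf' : ∀ x ∈ Ico 0 b, HasDerivWithinAt f (f' x) (Ici x) x)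
    (hf0 : 0 ≤ f 0) (hle : ∀ x ∈ Ico 0 b, f' x ≤ A * (1 + x) ^ (-(1 + β)) * f x) :
    ∀ x ∈ Icc 0 b, f x ≤ f 0 * exp (A / β) := by
  have hK : ∀ x ∈ Icc 0 b, HasDerivAt (fun y => -(A / β) * (1 + y) ^ (-β))
      (A * (1 + x) ^ (-(1 + β))) x := fun x hx => by
    have h := (((hasDerivAt_id x).const_add 1).rpow_const (p := -β)
      (Or.inl (by simp only [id]; linarith [hx.1]))).const_mul (-(A / β))
    rw [show -β - 1 = -(1 + β) by ring] at h
    exact h.congr_deriv (by simp only [id]; field_simp)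
  intro x hx
  refine (le_mul_exp_sub_of_deriv_le_mul hf hf' hK hle x hx).trans ?_
  have : 0 ≤ (1 + x) ^ (-β) := rpow_nonneg (by linarith [hx.1]) _
  gcongr
  simp only [add_zero, one_rpow]
  nlinarith [div_nonneg hA hβ.le]

theorem le_two_mul_mul_jb_rpow_of_deriv_le {f f' : ℝ → ℝ} {γ b : ℝ} (hγ0 : 0 ≤ γ) (hγ1 : γ ≤ 1)
    (hf : ContinuousOn f (Icc 0 b)) (hf' : ∀ x ∈ Ico 0 b, HasDerivWithinAt f (f' x) (Ici x) x)
    (hf0 : 0 ≤ f 0) (hle : ∀ x ∈ Ico 0 b, f' x ≤ γ * (jb x)⁻¹ * f x) :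
    ∀ x ∈ Icc 0 b, f x ≤ 2 * f 0 * jb x ^ γ := by
  intro x hx
  calc f x ≤ f 0 * exp (γ * arsinh x - γ * arsinh 0) :=
        le_mul_exp_sub_of_deriv_le_mul hf hf' (fun y _ => (hasDerivAt_arsinh y).const_mul γ)
          hle x hx
    _ ≤ f 0 * (2 * jb x ^ γ) := by
        rw [arsinh_zero, mul_zero, sub_zero]
        gcongr
        exact exp_mul_arsinh_le hγ0 hγ1 x
    _ = 2 * f 0 * jb x ^ γ := by ring

theorem forall_lt_of_forall_Ico_le_imp_lt {f g : ℝ → ℝ} {a b : ℝ} (hf : ContinuousOn f (Icc a b))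
    (hg : ContinuousOn g (Icc a b)) (step : ∀ u ∈ Icc a b, (∀ s ∈ Ico a u, f s ≤ g s) → f u < g u) :
    ∀ s ∈ Icc a b, f s < g s := by
  by_contra! h
  set B := Icc a b ∩ (g - f) ⁻¹' Iic 0
  have hB : IsClosed B := (hg.sub hf).preimage_isClosed_of_isClosed isClosed_Icc isClosed_Iic
  have hbdd : BddBelow B := ⟨a, fun s hs => hs.1.1⟩
  obtain ⟨s, hs, hgs⟩ := h
  obtain ⟨⟨hau, hub⟩, hgu⟩ := hB.csInf_mem ⟨s, hs, by simpa using hgs⟩ hbdd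
  refine (step _ ⟨hau, hub⟩ fun y hy => ?_).not_ge (by simpa using hgu)
  by_contra! hfy
  exact hy.2.not_ge (csInf_le hbdd ⟨⟨hy.1, hy.2.le.trans hub⟩, by simpa using hfy.le⟩)

structure EnergyInequalities (C₁ b : ℝ) (E F E' F' : ℝ → ℝ) : Prop where
  continuousOn_E : ContinuousOn E (Icc 0 b)
  continuousOn_F : ContinuousOn F (Icc 0 b)
  hasDerivWithinAt_E : ∀ x ∈ Ico 0 b, HasDerivWithinAt E (E' x) (Ici x) x
  hasDerivWithinAt_F : ∀ x ∈ Ico 0 b, HasDerivWithinAt F (F' x) (Ici x) x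
  nonneg_E : ∀ x ∈ Icc 0 b, 0 ≤ E x
  nonneg_F : ∀ x ∈ Icc 0 b, 0 ≤ F x
  deriv_E_le : ∀ x ∈ Ico 0 b, E' x ≤ C₁ * (jb x)⁻¹ * E x * √(F x)
  deriv_F_le : ∀ x ∈ Ico 0 b, F' x ≤ C₁ * jb x ^ (-(3 : ℝ) / 2) * √(E x) * F x

namespace EnergyInequalities

variable {C₁ b : ℝ} {E F E' F' : ℝ → ℝ}

theorem of_subset {D : Set ℝ} (hD : Icc 0 b ⊆ D) (hnonneg : ∀ x ∈ D, 0 ≤ E x ∧ 0 ≤ F x)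
    (hderiv : ∀ x ∈ D, HasDerivWithinAt E (E' x) D x ∧ HasDerivWithinAt F (F' x) D x)
    (hE' : ∀ x ∈ D, E' x ≤ C₁ * (jb x)⁻¹ * E x * √(F x))
    (hF' : ∀ x ∈ D, F' x ≤ C₁ * jb x ^ (-(3 : ℝ) / 2) * √(E x) * F x) :
    EnergyInequalities C₁ b E F E' F' := by
  have hD_nhds : ∀ x ∈ Ico 0 b, D ∈ 𝓝[Ici x] x := fun x hx =>
    mem_of_superset (Icc_mem_nhdsGE hx.2) ((Icc_subset_Icc_left hx.1).trans hD)
  exact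
    { continuousOn_E := fun x hx => (hderiv x (hD hx)).1.continuousWithinAt.mono hD
      continuousOn_F := fun x hx => (hderiv x (hD hx)).2.continuousWithinAt.mono hD
      hasDerivWithinAt_E := fun x hx =>
        (hderiv x (hD (Ico_subset_Icc_self hx))).1.mono_of_mem_nhdsWithin (hD_nhds x hx)
      hasDerivWithinAt_F := fun x hx =>
        (hderiv x (hD (Ico_subset_Icc_self hx))).2.mono_of_mem_nhdsWithin (hD_nhds x hx)
      nonneg_E := fun x hx => (hnonneg x (hD hx)).1
      nonneg_F := fun x hx => (hnonneg x (hD hx)).2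
      deriv_E_le := fun x hx => hE' x (hD (Ico_subset_Icc_self hx))
      deriv_F_le := fun x hx => hF' x (hD (Ico_subset_Icc_self hx)) }

theorem mono (h : EnergyInequalities C₁ b E F E' F') {u : ℝ} (hu : u ≤ b) :
    EnergyInequalities C₁ u E F E' F' where
  continuousOn_E := h.continuousOn_E.mono (Icc_subset_Icc_right hu)
  continuousOn_F := h.continuousOn_F.mono (Icc_subset_Icc_right hu)
  hasDerivWithinAt_E x hx := h.hasDerivWithinAt_E x (Ico_subset_Ico_right hu hx)
  hasDerivWithinAt_F x hx := h.hasDerivWithinAt_F x (Ico_subset_Ico_right hu hx)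
  nonneg_E x hx := h.nonneg_E x (Icc_subset_Icc_right hu hx)
  nonneg_F x hx := h.nonneg_F x (Icc_subset_Icc_right hu hx)
  deriv_E_le x hx := h.deriv_E_le x (Ico_subset_Ico_right hu hx)
  deriv_F_le x hx := h.deriv_F_le x (Ico_subset_Ico_right hu hx)

theorem F_le (h : EnergyInequalities C₁ b E F E' F') {M γ : ℝ} (hC₁ : 0 ≤ C₁) (hM : 0 ≤ M)
    (hγ0 : 0 ≤ γ) (hγ1 : γ < 1) (hE : ∀ x ∈ Ico 0 b, E x ≤ 4 * M ^ 2 * jb x ^ γ) :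
    ∀ x ∈ Icc 0 b, F x ≤ F 0 * exp (8 * C₁ * M / (1 - γ)) := by
  have hβ : 0 < (1 - γ) / 2 := by linarith
  have hA : 0 ≤ 4 * C₁ * M := by positivity
  have hexp : 8 * C₁ * M / (1 - γ) = 4 * C₁ * M / ((1 - γ) / 2) := by field_simp; ring
  rw [hexp]
  intro y hy
  refine le_mul_exp_of_deriv_le_mul_one_add_rpow hA hβ h.continuousOn_F h.hasDerivWithinAt_F
    (h.nonneg_F 0 ⟨le_rfl, hy.1.trans hy.2⟩) (fun x hx => ?_) y hy
  have hjb := jb_pos x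
  have hFx := h.nonneg_F x (Ico_subset_Icc_self hx)
  have hsqrtE : √(E x) ≤ 2 * M * jb x ^ (γ / 2) := by
    rw [sqrt_le_left (by positivity), mul_pow, ← rpow_natCast (jb x ^ (γ / 2)), ← rpow_mul hjb.le]
    norm_num
    linarith [hE x hx]
  have hrate : jb x ^ (-(3 : ℝ) / 2) * jb x ^ (γ / 2) ≤ 2 * (1 + x) ^ (-(1 + (1 - γ) / 2)) := by
    rw [← rpow_add hjb, show -(3 : ℝ) / 2 + γ / 2 = -(1 + (1 - γ) / 2) by ring]
    exact jb_rpow_neg_le (by linarith) (by linarith) hx.1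
  calc F' x ≤ C₁ * jb x ^ (-(3 : ℝ) / 2) * √(E x) * F x := h.deriv_F_le x hx
    _ ≤ C₁ * jb x ^ (-(3 : ℝ) / 2) * (2 * M * jb x ^ (γ / 2)) * F x := by gcongr
    _ = 2 * C₁ * M * (jb x ^ (-(3 : ℝ) / 2) * jb x ^ (γ / 2)) * F x := by ring
    _ ≤ 2 * C₁ * M * (2 * (1 + x) ^ (-(1 + (1 - γ) / 2))) * F x := by gcongr
    _ = 4 * C₁ * M * (1 + x) ^ (-(1 + (1 - γ) / 2)) * F x := by ring

theorem E_le (h : EnergyInequalities C₁ b E F E' F') {γ : ℝ} (hγ0 : 0 ≤ γ) (hγ1 : γ ≤ 1)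
    (hF : ∀ x ∈ Ico 0 b, C₁ * √(F x) ≤ γ) : ∀ x ∈ Icc 0 b, E x ≤ 2 * E 0 * jb x ^ γ := by
  intro y hy
  refine le_two_mul_mul_jb_rpow_of_deriv_le hγ0 hγ1 h.continuousOn_E h.hasDerivWithinAt_E
    (h.nonneg_E 0 ⟨le_rfl, hy.1.trans hy.2⟩) (fun x hx => ?_) y hy
  have : 0 ≤ (jb x)⁻¹ * E x :=
    mul_nonneg (inv_nonneg.2 (jb_pos x).le) (h.nonneg_E x (Ico_subset_Icc_self hx))
  calc E' x ≤ C₁ * (jb x)⁻¹ * E x * √(F x) := h.deriv_E_le x hx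
    _ = C₁ * √(F x) * ((jb x)⁻¹ * E x) := by ring
    _ ≤ γ * ((jb x)⁻¹ * E x) := mul_le_mul_of_nonneg_right (hF x hx) this
    _ = γ * (jb x)⁻¹ * E x := by ring

theorem bounds (h : EnergyInequalities C₁ b E F E' F') {M γ ε : ℝ} (hC₁ : 0 ≤ C₁) (hM : 0 < M)
    (hγ0 : 0 ≤ γ) (hγ1 : γ < 1) (hε : 0 ≤ ε) (hsmall : C₁ * ε * exp (4 * C₁ * M / (1 - γ)) ≤ γ)
    (hE0 : E 0 ≤ M ^ 2) (hF0 : F 0 ≤ ε ^ 2) :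
    ∀ x ∈ Icc 0 b, E x ≤ 2 * M ^ 2 * jb x ^ γ ∧ F x ≤ ε ^ 2 * exp (8 * C₁ * M / (1 - γ)) := by
  have hexp : exp (8 * C₁ * M / (1 - γ)) = exp (4 * C₁ * M / (1 - γ)) ^ 2 := by
    rw [← exp_nat_mul]; ring_nf
  have improve : ∀ u ∈ Icc 0 b, (∀ x ∈ Ico 0 u, E x ≤ 4 * M ^ 2 * jb x ^ γ) →
      E u ≤ 2 * M ^ 2 * jb u ^ γ ∧ F u ≤ ε ^ 2 * exp (8 * C₁ * M / (1 - γ)) := by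
    intro u hu hE
    have hu' := h.mono hu.2
    have hF : ∀ x ∈ Icc 0 u, F x ≤ ε ^ 2 * exp (8 * C₁ * M / (1 - γ)) := fun x hx =>
      (hu'.F_le hC₁ hM.le hγ0 hγ1 hE x hx).trans (by gcongr)
    have hsqrtF : ∀ x ∈ Ico 0 u, C₁ * √(F x) ≤ γ := fun x hx => by
      refine le_trans ?_ hsmall
      rw [mul_assoc]
      gcongr
      rw [sqrt_le_left (by positivity), mul_pow, ← hexp]
      exact hF x (Ico_subset_Icc_self hx)
    refine ⟨(hu'.E_le hγ0 hγ1.le hsqrtF u ⟨hu.1, le_rfl⟩).trans ?_, hF u ⟨hu.1, le_rfl⟩⟩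
    have := rpow_nonneg (jb_pos u).le γ
    gcongr
  have hcont : ContinuousOn (fun x => 4 * M ^ 2 * jb x ^ γ) (Icc 0 b) :=
    (continuous_const.mul (continuous_jb.rpow_const fun x => Or.inl (jb_pos x).ne')).continuousOn
  have hlt := forall_lt_of_forall_Ico_le_imp_lt h.continuousOn_E hcont fun u hu hE => by
    have := rpow_pos_of_pos (jb_pos u) γ
    nlinarith [(improve u hu hE).1, pow_pos hM 2]
  exact fun x hx => improve x hx fun y hy => (hlt y ⟨hy.1, hy.2.le.trans hx.2⟩).le

end EnergyInequalities

/-- the continuity/bootstrap argument behind Theorem 1.1: if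
`E, F : [0,T) → [0,∞)` are continuously differentiable with `E(0) ≤ M²`, `F(0) ≤ ε²`,
`E' ≤ C₁⟨t⟩⁻¹ E F^{1/2}` and `F' ≤ C₁⟨t⟩^{-3/2} E^{1/2} F`, then
`E(t) ≤ C₀M²⟨t⟩^γ` and `F(t) ≤ C₀ε²e^{C₀M}` on `[0,T)`, where `ε₀ ∈ (0, e^{-M})` and
`C₀ > 1` depend only on `C₁, M, γ`. Here `T ∈ (0, ∞]`. -/
theorem bootstrap_differential_inequalities
    (C₁ M γ : ℝ) (hC₁ : 1 ≤ C₁) (hM : 0 < M) (hγ0 : 0 < γ) (hγ : γ < 1 / 8) :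
    ∃ ε₀ C₀ : ℝ, 0 < ε₀ ∧ ε₀ < Real.exp (-M) ∧ 1 < C₀ ∧
      ∀ (T : EReal) (ε : ℝ) (E F E' F' : ℝ → ℝ), 0 < T → 0 < ε → ε ≤ ε₀ →
        (∀ t : ℝ, 0 ≤ t → (t : EReal) < T → 0 ≤ E t ∧ 0 ≤ F t) →
        (∀ t : ℝ, 0 ≤ t → (t : EReal) < T →
          HasDerivWithinAt E (E' t) {s : ℝ | 0 ≤ s ∧ (s : EReal) < T} t ∧
          HasDerivWithinAt F (F' t) {s : ℝ | 0 ≤ s ∧ (s : EReal) < T} t) →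
        ContinuousOn E' {s : ℝ | 0 ≤ s ∧ (s : EReal) < T} →
        ContinuousOn F' {s : ℝ | 0 ≤ s ∧ (s : EReal) < T} →
        E 0 ≤ M ^ 2 → F 0 ≤ ε ^ 2 →
        (∀ t : ℝ, 0 ≤ t → (t : EReal) < T →
          E' t ≤ C₁ * (jb t)⁻¹ * E t * Real.sqrt (F t)) →
        (∀ t : ℝ, 0 ≤ t → (t : EReal) < T →
          F' t ≤ C₁ * jb t ^ (-(3 : ℝ) / 2) * Real.sqrt (E t) * F t) →
        ∀ t : ℝ, 0 ≤ t → (t : EReal) < T →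
          E t ≤ C₀ * M ^ 2 * jb t ^ γ ∧ F t ≤ C₀ * ε ^ 2 * Real.exp (C₀ * M) := by
  have hγ1 : γ < 1 := by linarith
  have hC₁0 : 0 < C₁ := by linarith
  have hc : 0 ≤ 8 * C₁ / (1 - γ) := div_nonneg (by positivity) (by linarith)
  refine ⟨min (exp (-M) / 2) (γ / (C₁ * exp (4 * C₁ * M / (1 - γ)))), 2 + 8 * C₁ / (1 - γ),
    by positivity, (min_le_left _ _).trans_lt (half_lt_self (exp_pos _)), by linarith, ?_⟩
  intro T ε E F E' F' _ hε hεε₀ hnonneg hderiv _ _ hE0 hF0 hE' hF' t ht htT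
  have hsys : EnergyInequalities C₁ t E F E' F' :=
    .of_subset (D := {s : ℝ | 0 ≤ s ∧ (s : EReal) < T})
      (fun s hs => ⟨hs.1, (EReal.coe_le_coe_iff.2 hs.2).trans_lt htT⟩)
      (fun s hs => hnonneg s hs.1 hs.2) (fun s hs => hderiv s hs.1 hs.2)
      (fun s hs => hE' s hs.1 hs.2) (fun s hs => hF' s hs.1 hs.2)
  have hsmall : C₁ * ε * exp (4 * C₁ * M / (1 - γ)) ≤ γ := by
    have := hεε₀.trans (min_le_right _ _)
    rw [le_div_iff₀ (by positivity)] at this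
    linarith
  obtain ⟨hEt, hFt⟩ := hsys.bounds hC₁0.le hM hγ0.le hγ1 hε.le hsmall hE0 hF0 t ⟨ht, le_rfl⟩
  have hjb := rpow_nonneg (jb_pos t).le γ
  refine ⟨hEt.trans (by gcongr; linarith), hFt.trans ?_⟩
  calc ε ^ 2 * exp (8 * C₁ * M / (1 - γ)) ≤ 1 * ε ^ 2 * exp ((2 + 8 * C₁ / (1 - γ)) * M) := by
        rw [one_mul, add_mul, mul_div_right_comm]
        gcongr
        linarith
    _ ≤ (2 + 8 * C₁ / (1 - γ)) * ε ^ 2 * exp ((2 + 8 * C₁ / (1 - γ)) * M) := by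
        gcongr
        linarith
end
end
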